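/- Let α : ℝ → ℝ be twice continuously differentiable and bounded, let M > 0 satisfy |α(u)| ≤ M for all u ∈ ℝ, and let 0 < c < 1/(16 M). Then for every x ∈ ℝ², the determinant of the Jacobian (Fréchet derivative) of G at x is strictly positive. -/

import Mathlib

noncomputable section

/-- `φ(u) = (1 - u²)⁴` for `|u| ≤ 1` and `φ(u) = 0` for `|u| > 1`. -/
def phi (u : ℝ) : ℝ := if |u| ≤ 1 then (1 - u^2)^4 else 0

/-- The sign function: `1` for positive, `-1` for negative, `0` at `0`. -/
def sgn (u : ℝ) : ℝ := if 0 < u then 1 else if u < 0 then -1 else 0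

/-- The plane with the Euclidean norm. -/
abbrev E2 := EuclideanSpace ℝ (Fin 2)

/-- The vector `(a, b)` of `ℝ²`. -/
def vec2 (a b : ℝ) : E2 := (WithLp.equiv 2 (Fin 2 → ℝ)).symm ![a, b]

/-- `φ̃(x) = φ((x₁ - x₂)/(√2 c)) · α((x₁ + x₂)/2)`. -/
def phiT (c : ℝ) (α : ℝ → ℝ) (x : E2) : ℝ :=
  phi ((x 0 - x 1) / (Real.sqrt 2 * c)) * α ((x 0 + x 1) / 2)

/-- `G(x) = x + (1/√2)(x₁ - x₂)² sgn(x₁ - x₂) φ̃(x) · (1, -1)`. -/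
def Gmap (c : ℝ) (α : ℝ → ℝ) (x : E2) : E2 :=
  x + ((1 / Real.sqrt 2) * (x 0 - x 1)^2 * sgn (x 0 - x 1) * phiT c α x) • vec2 1 (-1)

-- derivative of (max · 0)^2
lemma pp_sq (x : ℝ) : HasDerivAt (fun y : ℝ => (max y 0)^2) (2 * max x 0) x := by
  rcases lt_trichotomy x 0 with h | h | h
  · have hev : (fun y : ℝ => (max y 0)^2) =ᶠ[nhds x] fun _ => (0:ℝ) := by
      filter_upwards [Iio_mem_nhds h] with y hy
      simp [max_eq_right (le_of_lt (Set.mem_Iio.mp hy))]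
    rw [max_eq_right h.le, mul_zero]
    exact (hasDerivAt_const x (0:ℝ)).congr_of_eventuallyEq hev
  · subst h
    rw [max_self, mul_zero]
    rw [hasDerivAt_iff_isLittleO]
    rw [Asymptotics.isLittleO_iff]
    intro ε hε
    filter_upwards [Metric.ball_mem_nhds (0:ℝ) hε] with y hy
    rw [Metric.mem_ball, Real.dist_eq, sub_zero] at hy
    have h1 : max y 0 ≤ |y| := max_le (le_abs_self y) (abs_nonneg y)
    have h2 : (0:ℝ) ≤ max y 0 := le_max_right y 0
    simp only [sub_zero, smul_zero, sub_zero, Real.norm_eq_abs, max_self,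
      ne_eq, OfNat.ofNat_ne_zero, not_false_eq_true, zero_pow]
    rw [abs_of_nonneg (by positivity : (0:ℝ) ≤ (max y 0)^2)]
    nlinarith [abs_nonneg y]
  · have hev : (fun y : ℝ => (max y 0)^2) =ᶠ[nhds x] fun y => y^2 := by
      filter_upwards [Ioi_mem_nhds h] with y hy
      simp [max_eq_left (le_of_lt (Set.mem_Iio.mp hy))]
    rw [max_eq_left h.le]
    have h2 := hasDerivAt_pow 2 x
    norm_num at h2
    exact h2.congr_of_eventuallyEq hev

lemma phi_eq (t : ℝ) : phi t = ((max (1 - t^2) 0)^2)^2 := by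
  unfold phi
  rcases le_or_gt |t| 1 with h | h
  · rw [if_pos h, max_eq_left (by nlinarith [sq_abs t, abs_nonneg t])]
    ring
  · rw [if_neg (not_le.2 h), max_eq_right (by nlinarith [sq_abs t, abs_nonneg t])]
    norm_num

def phiD (t : ℝ) : ℝ := -8 * t * (max (1 - t^2) 0)^3

lemma hasDerivAt_phi (t : ℝ) : HasDerivAt phi (phiD t) t := by
  have h1 : HasDerivAt (fun y : ℝ => 1 - y^2) (-(2*t)) t := by
    simpa using ((hasDerivAt_pow 2 t).const_sub 1)
  have h2 := (pp_sq (1 - t^2)).comp t h1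
  have h3 := h2.pow 2
  have heq : phi = fun y : ℝ => (((fun z : ℝ => (max z 0)^2) ∘ fun y : ℝ => 1 - y^2) y)^2 := by
    funext y; simp [phi_eq, Function.comp]
  rw [heq]
  refine h3.congr_deriv ?_
  unfold phiD
  simp [Function.comp]
  ring

lemma m_eq (u : ℝ) : u^2 * sgn u = (max u 0)^2 - (max (-u) 0)^2 := by
  unfold sgn
  rcases lt_trichotomy u 0 with h | h | h
  · rw [if_neg (by linarith), if_pos h, max_eq_right h.le, max_eq_left (by linarith)]; ring
  · simp [h]
  · rw [if_pos h, max_eq_left h.le, max_eq_right (by linarith)]; ring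

lemma hasDerivAt_m (u : ℝ) : HasDerivAt (fun y : ℝ => y^2 * sgn y) (2 * |u|) u := by
  have h2 : HasDerivAt (fun y : ℝ => (max (-y) 0)^2) (2 * max (-u) 0 * (-1)) u :=
    (pp_sq (-u)).comp u (hasDerivAt_neg u)
  have h3 := (pp_sq u).sub h2
  have heq : (fun y : ℝ => y^2 * sgn y) = fun y : ℝ => (max y 0)^2 - (max (-y) 0)^2 :=
    funext m_eq
  rw [heq]
  refine h3.congr_deriv ?_
  rcases le_total u 0 with h | h
  · rw [abs_of_nonpos h, max_eq_right h, max_eq_left (by linarith)]; ring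
  · rw [abs_of_nonneg h, max_eq_left h, max_eq_right (by linarith)]; ring

lemma hasDerivAt_psi (c : ℝ) (u : ℝ) :
    HasDerivAt (fun y : ℝ => y^2 * sgn y * phi (y / (Real.sqrt 2 * c)))
      (2*|u| * phi (u/(Real.sqrt 2*c))
        + u^2*sgn u * (phiD (u/(Real.sqrt 2*c)) * (1/(Real.sqrt 2*c)))) u := by
  have hdiv : HasDerivAt (fun y : ℝ => y / (Real.sqrt 2 * c)) (1/(Real.sqrt 2*c)) u :=
    (hasDerivAt_id u).div_const _
  have hcomp := (hasDerivAt_phi (u/(Real.sqrt 2*c))).comp u hdiv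
  exact (hasDerivAt_m u).mul hcomp

lemma psiD_bound (c : ℝ) (hc : 0 < c) (u : ℝ) :
    |2*|u| * phi (u/(Real.sqrt 2*c))
      + u^2*sgn u * (phiD (u/(Real.sqrt 2*c)) * (1/(Real.sqrt 2*c)))|
    ≤ 2 * (Real.sqrt 2 * c) := by
  have hk0 : 0 < Real.sqrt 2 * c := mul_pos (Real.sqrt_pos.mpr two_pos) hc
  set k := Real.sqrt 2 * c with hkdef
  set t := u / k with htdef
  have hu : u = k * t := by rw [htdef]; field_simp [hk0.ne']
  set p := max (1 - t^2) 0 with hpdef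
  have hp0 : 0 ≤ p := le_max_right _ _
  have hp1 : p ≤ 1 := max_le (by nlinarith [sq_nonneg t]) zero_le_one
  have hphi : phi t = (p^2)^2 := phi_eq t
  have htp : |t| * p ≤ 1/2 := by
    rcases le_or_gt (1 - t^2) 0 with h | h
    · rw [hpdef, max_eq_right h]; simp
    · rw [hpdef, max_eq_left h.le]
      have h1 : |t| ≤ 1 := by nlinarith [sq_abs t, abs_nonneg t]
      nlinarith [sq_abs t, abs_nonneg t,
        mul_nonneg (abs_nonneg t) (sq_nonneg (2*|t| - 1)), sq_nonneg (2*|t| - 1)]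
  have habs : |u| = k * |t| := by rw [hu, abs_mul, abs_of_pos hk0]
  have hsgn : |sgn u| ≤ 1 := by unfold sgn; split_ifs <;> norm_num
  have hphiD : |phiD t| = 8 * |t| * p^3 := by
    unfold phiD
    rw [← hpdef, abs_mul, abs_mul]
    rw [abs_of_nonneg (pow_nonneg hp0 3)]
    norm_num
  have e1 : |t| * p^4 ≤ (1/2) * p^3 := by
    nlinarith [pow_nonneg hp0 3, htp, mul_nonneg (abs_nonneg t) (pow_nonneg hp0 3)]
  have e2 : p^3 ≤ 1 := by nlinarith [pow_nonneg hp0 3, sq_nonneg p]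
  have e3 : |t| ^ 3 * p^3 ≤ 1/8 := by
    have h := pow_le_pow_left₀ (mul_nonneg (abs_nonneg t) hp0) htp 3
    calc |t| ^ 3 * p^3 = (|t| * p)^3 := by ring
    _ ≤ (1/2)^3 := h
    _ = 1/8 := by norm_num
  have hsq : |u|^2 = u^2 := sq_abs u
  calc |2*|u| * phi t + u^2*sgn u * (phiD t * (1/k))|
      ≤ |2*|u| * phi t| + |u^2*sgn u * (phiD t * (1/k))| := abs_add_le _ _
    _ = 2*(k*|t|)*(p^2)^2 + u^2*|sgn u| *((8*|t| *p^3) * (1/k)) := by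
        rw [hphi, abs_mul, abs_mul, abs_mul, abs_mul, abs_mul, abs_abs, hphiD, habs,
          abs_of_nonneg (by norm_num : (0:ℝ) ≤ 2), abs_of_nonneg (sq_nonneg u),
          abs_of_nonneg (by positivity : (0:ℝ) ≤ (p^2)^2),
          abs_of_nonneg (by positivity : (0:ℝ) ≤ 1/k)]
    _ ≤ 2*(k*|t|)*(p^2)^2 + u^2*1*((8*|t| *p^3) * (1/k)) := by
        gcongr
    _ = 2*k*(|t| * p^4) + 8*k*(|t| ^ 3 * p^3) := by
        have hu2 : u^2 = k^2 * |t| ^ 2 := by rw [hu, mul_pow, sq_abs]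
        have hk' : k ≠ 0 := ne_of_gt hk0
        have hkk : k ^ 2 * (1 / k) = k := by field_simp [hk']
        rw [hu2]
        linear_combination 8 * |t| ^ 3 * p ^ 3 * hkk
    _ ≤ 2*k*((1/2) * p^3) + 8*k*(1/8) := by gcongr
    _ ≤ 2*k*(1/2 * 1) + 8*k*(1/8) := by gcongr
    _ = 2 * k := by ring

/-- If `α` is `C²` and bounded by `M > 0`, and `0 < c < 1/(16 M)`, then the
determinant of the Jacobian of `G` is strictly positive everywhere. -/
theorem stmt_8 (α : ℝ → ℝ) (hα : ContDiff ℝ 2 α) (M : ℝ) (hM : 0 < M)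
    (hbound : ∀ u : ℝ, |α u| ≤ M) (c : ℝ) (hc0 : 0 < c) (hc1 : c < 1 / (16 * M)) :
    ∀ x : E2, 0 < (fderiv ℝ (Gmap c α) x).det := by
  intro x
  have hcM : c * M < 1/16 := by
    rw [lt_div_iff₀ (by positivity : (0:ℝ) < 16*M)] at hc1
    nlinarith
  have hs2 : (0:ℝ) < Real.sqrt 2 := Real.sqrt_pos.mpr two_pos
  have hs2sq : Real.sqrt 2 * Real.sqrt 2 = 2 := Real.mul_self_sqrt (by norm_num)
  -- the two linear functionals
  set A : E2 →L[ℝ] ℝ := EuclideanSpace.proj 0 - EuclideanSpace.proj 1 with hA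
  set B : E2 →L[ℝ] ℝ := (1/2 : ℝ) • (EuclideanSpace.proj (0 : Fin 2) + EuclideanSpace.proj 1)
    with hB
  have hAx : ∀ y : E2, A y = y 0 - y 1 := by
    intro y; simp [hA]
  have hBx : ∀ y : E2, B y = (y 0 + y 1) / 2 := by
    intro y; simp [hB]; ring
  set u : ℝ := x 0 - x 1 with hu
  set v : ℝ := (x 0 + x 1) / 2 with hv
  set D : ℝ := 2*|u| * phi (u/(Real.sqrt 2*c))
      + u^2*sgn u * (phiD (u/(Real.sqrt 2*c)) * (1/(Real.sqrt 2*c))) with hD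
  have hψ : HasDerivAt (fun y : ℝ => y^2 * sgn y * phi (y / (Real.sqrt 2 * c))) D u :=
    hasDerivAt_psi c u
  have hαd : HasDerivAt α (deriv α v) v :=
    ((hα.differentiable (by norm_num)) v).hasDerivAt
  have hF1 : HasFDerivAt (fun y : E2 =>
      (A y)^2 * sgn (A y) * phi ((A y) / (Real.sqrt 2 * c))) (D • A) x :=
    hψ.comp_hasFDerivAt_of_eq x A.hasFDerivAt (hAx x)
  have hF2 : HasFDerivAt (fun y : E2 => α (B y)) (deriv α v • B) x :=
    hαd.comp_hasFDerivAt_of_eq x B.hasFDerivAt (hBx x).symm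
  have hmul := hF1.mul hF2
  have hs := hmul.const_mul (1 / Real.sqrt 2)
  have hsum := (hasFDerivAt_id x).add (hs.smul_const (vec2 1 (-1)))
  have hfun : Gmap c α = fun y : E2 => id y + ((1 / Real.sqrt 2) *
      ((A y)^2 * sgn (A y) * phi ((A y) / (Real.sqrt 2 * c)) * α (B y))) • vec2 1 (-1) := by
    funext y
    unfold Gmap phiT
    rw [hAx y, hBx y]
    show _ = y + _
    congr 1
    ring_nf
  rw [hfun]
  rw [(show HasFDerivAt (fun y : E2 => id y + ((1 / Real.sqrt 2) *
      ((A y)^2 * sgn (A y) * phi ((A y) / (Real.sqrt 2 * c)) * α (B y))) • vec2 1 (-1)) _ x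
      from hsum).fderiv]
  unfold ContinuousLinearMap.det
  rw [← LinearMap.det_toMatrix (EuclideanSpace.basisFun (Fin 2) ℝ).toBasis,
    Matrix.det_fin_two]
  simp only [LinearMap.toMatrix_apply, OrthonormalBasis.coe_toBasis,
    OrthonormalBasis.coe_toBasis_repr_apply, EuclideanSpace.basisFun_apply,
    EuclideanSpace.basisFun_repr, ContinuousLinearMap.coe_coe,
    ContinuousLinearMap.add_apply, ContinuousLinearMap.coe_id', id_eq,
    ContinuousLinearMap.smulRight_apply, ContinuousLinearMap.coe_smul',
    Pi.smul_apply, ContinuousLinearMap.smul_apply, smul_eq_mul,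
    PiLp.add_apply, PiLp.smul_apply, hAx, hBx, EuclideanSpace.single_apply]
  norm_num [show vec2 1 (-1) 0 = 1 from rfl, show vec2 1 (-1) 1 = -1 from rfl]
  have hkey : 0 < 1 + 1 / Real.sqrt 2 * (α ((x 0 + x 1) / 2) * (D * 2)) := by
    have hDb := psiD_bound c hc0 u
    rw [← hD] at hDb
    have haM := hbound ((x 0 + x 1) / 2)
    have hz : |α ((x 0 + x 1) / 2) * (D * 2)| ≤ M * (2 * (Real.sqrt 2 * c) * 2) := by
      calc |α ((x 0 + x 1) / 2) * (D * 2)| = |α ((x 0 + x 1) / 2)| * (|D| * 2) := by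
            rw [abs_mul, abs_mul]; norm_num
        _ ≤ M * (2 * (Real.sqrt 2 * c) * 2) := by gcongr
    have habs2 := neg_abs_le (α ((x 0 + x 1) / 2) * (D * 2))
    have hs2' : (0:ℝ) < 1 / Real.sqrt 2 := by positivity
    have e : 1 / Real.sqrt 2 * (M * (2 * (Real.sqrt 2 * c) * 2)) = 4 * (c * M) := by
      field_simp
      ring
    have f1 := mul_le_mul_of_nonneg_left hz hs2'.le
    have f2 := mul_le_mul_of_nonneg_left habs2 hs2'.le
    linarith [f1, f2, e, hcM]
  convert hkey using 1
  ring
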